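/- Let x, y be p-strings both starting with p-symbols, with ⟨x[2..]⟩ < ⟨y[2..]⟩ and e = lcp∞(⟨x[2..]⟩,⟨y[2..]⟩). If e < min{fce(x), fce(y)}, then ⟨x⟩ < ⟨y⟩, lcp(⟨x⟩,⟨y⟩) = lcp(⟨x[2..]⟩,⟨y[2..]⟩)+1 and lcp∞(⟨x⟩,⟨y⟩) = e+1. -/

import Mathlib

/-- Symbols of a parameterized string: static symbols `s a` (from Σs) and
parameter symbols `p a` (from Σp). -/
inductive PSym where
  | s : ℕ → PSym
  | p : ℕ → PSym
deriving DecidableEq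

/-- Symbols of a p-encoded string: static symbols, finite distances, and ∞. -/
inductive Enc where
  | s : ℕ → Enc
  | fin : ℕ → Enc
  | inf : Enc
deriving DecidableEq

/-- Order embedding: static symbols < natural numbers < ∞. -/
def Enc.toPair : Enc → ℕ ×ₗ ℕ
  | .s a => toLex (0, a)
  | .fin d => toLex (1, d)
  | .inf => toLex (2, 0)

instance : LinearOrder Enc :=
  LinearOrder.lift' Enc.toPair (by
    rintro (a | a | _) (b | b | _) h <;>
      simp_all [Enc.toPair, toLex_inj, Prod.ext_iff])

/-- Largest position `j < i` (0-based) carrying the same symbol as position `i`. -/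
def prevOcc (w : List PSym) (i : ℕ) : Option ℕ :=
  ((List.range i).filter (fun j => w[j]? = w[i]?)).max?

/-- The p-encoding of position `i` (0-based) of `w`. -/
def pencSym (w : List PSym) (i : ℕ) : Enc :=
  match w[i]? with
  | some (PSym.s a) => Enc.s a
  | some (PSym.p _) =>
    match prevOcc w i with
    | some j => Enc.fin (i - j)
    | none => Enc.inf
  | none => Enc.inf

/-- The p-encoding ⟨w⟩ of a p-string `w`. -/
def penc (w : List PSym) : List Enc :=
  (List.range w.length).map (pencSym w)

/-- Lexicographic (strict) order on p-encoded strings. -/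
def lexLt (x y : List Enc) : Prop := List.Lex (· < ·) x y

def lexLe (x y : List Enc) : Prop := lexLt x y ∨ x = y

/-- Length of the longest common prefix. -/
def lcp {α : Type*} [DecidableEq α] : List α → List α → ℕ
  | a :: x, b :: y => if a = b then lcp x y + 1 else 0
  | _, _ => 0

/-- Number of ∞'s in the longest common prefix of two p-encoded strings. -/
def lcpInf (x y : List Enc) : ℕ := (x.take (lcp x y)).count Enc.inf

/-- Number of distinct p-symbols occurring in `w` (denoted |w|_p). -/
def distinctP (w : List PSym) : ℕ :=
  (w.filterMap (fun s => match s with | PSym.p a => some a | PSym.s _ => none)).dedup.length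

/-- For `w` starting with a p-symbol: the rank of `w[1]` among the distinct
p-symbols of `w[1..h+1]`, where `h+1 = min{|w|, second occurrence of w[1] in w}`. -/
def fceRank (w : List PSym) : ℕ :=
  match w with
  | [] => 0
  | c :: rest => distinctP ((c :: rest).take (min (c :: rest).length (2 + rest.idxOf c)))

/-- The function fce from the paper; `fce ε = $` is modelled as `Enc.s 0`. -/
def fce (w : List PSym) : Enc :=
  match w with
  | [] => Enc.s 0
  | PSym.s a :: _ => Enc.s a
  | w => Enc.fin (fceRank w)

/-!
Prepending `p a` to `w` changes a single entry of the encoding besides the new leading `∞`: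
the `∞` at the first occurrence of `p a` in `w` becomes its distance back to position 0.
Since the `∞`'s in a prefix of `⟨w⟩` count the distinct p-symbols of the same prefix of `w`,
`e < fce(x)` says that `p a` does not occur in the first `lcp(⟨x[2..]⟩, ⟨y[2..]⟩)` symbols
of `x[2..]`, and likewise for `y`, so the common prefix survives unchanged. At the first
mismatch the left entry is below the right one, hence not `∞` and unchanged. If the right
entry changes, it becomes `n + 1` at position `n`, which still exceeds every static symbol
and every back-distance (at most `n`) there.
-/

theorem lcp_cons_self {α : Type*} [DecidableEq α] (c : α) (l₁ l₂ : List α) :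
    lcp (c :: l₁) (c :: l₂) = lcp l₁ l₂ + 1 := by
  simp [lcp]

theorem take_lcp {α : Type*} [DecidableEq α] :
    ∀ l₁ l₂ : List α, l₁.take (lcp l₁ l₂) = l₂.take (lcp l₁ l₂)
  | a :: l₁, b :: l₂ => by
    by_cases h : a = b
    · subst h
      simp [lcp_cons_self, take_lcp l₁ l₂]
    · simp [lcp, h]
  | [], _ | _ :: _, [] => by simp [lcp]

theorem getElem?_lcp_lt {α : Type*} [DecidableEq α] [Preorder α] {l₁ l₂ : List α}
    (h : List.Lex (· < ·) l₁ l₂) : l₁[lcp l₁ l₂]? < l₂[lcp l₁ l₂]? := by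
  induction h with
  | nil => simp [lcp]
  | rel hab => simpa [lcp, hab.ne] using hab
  | cons _ ih => simpa [lcp_cons_self] using ih

-- With `none < some _` on `Option`, this covers the case of `l₁` being a proper prefix of `l₂`.
theorem lex_of_take_eq_of_getElem?_lt {α : Type*} [LT α] :
    ∀ {l₁ l₂ : List α} {n : ℕ}, l₁.take n = l₂.take n → l₁[n]? < l₂[n]? →
      List.Lex (· < ·) l₁ l₂
  | [], _ :: _, _, _, _ => .nil
  | a :: l₁, b :: l₂, 0, _, h => .rel (by simpa using h)
  | a :: l₁, b :: l₂, n + 1, ht, h => by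
    obtain ⟨rfl, ht'⟩ := List.cons_eq_cons.mp ht
    exact .cons (lex_of_take_eq_of_getElem?_lt ht' (by simpa using h))
  | [], [], _, _, h | _ :: _, [], _, _, h => by simp at h

theorem lcp_eq_of_take_eq_of_getElem?_lt {α : Type*} [DecidableEq α] [Preorder α] :
    ∀ {l₁ l₂ : List α} {n : ℕ}, l₁.take n = l₂.take n → l₁[n]? < l₂[n]? → lcp l₁ l₂ = n
  | [], _ :: _, 0, _, _ => rfl
  | [], _ :: _, n + 1, ht, _ => by simp at ht
  | a :: l₁, b :: l₂, 0, _, h => by simp [lcp, (show a < b by simpa using h).ne]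
  | a :: l₁, b :: l₂, n + 1, ht, h => by
    obtain ⟨rfl, ht'⟩ := List.cons_eq_cons.mp ht
    simpa [lcp_cons_self] using lcp_eq_of_take_eq_of_getElem?_lt ht' (by simpa using h)
  | [], [], _, _, h | _ :: _, [], _, _, h => by simp at h

theorem Enc.le_inf (u : Enc) : u ≤ Enc.inf := by
  change u.toPair ≤ Enc.inf.toPair
  cases u <;> simp [Enc.toPair, Prod.Lex.le_iff]

theorem Enc.s_lt_fin (a d : ℕ) : Enc.s a < Enc.fin d := by
  change Enc.toPair _ < Enc.toPair _
  simp [Enc.toPair, Prod.Lex.lt_iff]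

theorem Enc.fin_lt_fin {d d' : ℕ} (h : d < d') : Enc.fin d < Enc.fin d' := by
  change Enc.toPair _ < Enc.toPair _
  simp [Enc.toPair, Prod.Lex.lt_iff, h]

theorem Enc.not_some_inf_lt (o : Option Enc) : ¬ some Enc.inf < o := by
  cases o <;> simp [(Enc.le_inf _).not_gt]

theorem prevOcc_eq_none_iff (w : List PSym) (i : ℕ) :
    prevOcc w i = none ↔ ∀ j < i, w[j]? ≠ w[i]? := by
  simp [prevOcc, List.filter_eq_nil_iff]

theorem prevOcc_eq_some_iff (w : List PSym) (i j : ℕ) :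
    prevOcc w i = some j ↔ j < i ∧ w[j]? = w[i]? ∧ ∀ k < i, w[k]? = w[i]? → k ≤ j := by
  rw [prevOcc, List.max?_eq_some_iff]
  simp only [List.mem_filter, List.mem_range, decide_eq_true_eq]
  exact ⟨fun ⟨⟨h₁, h₂⟩, h₃⟩ => ⟨h₁, h₂, fun k hk hw => h₃ k ⟨hk, hw⟩⟩,
    fun ⟨h₁, h₂, h₃⟩ => ⟨⟨h₁, h₂⟩, fun k ⟨hk, hw⟩ => h₃ k hk hw⟩⟩

theorem prevOcc_eq_none_iff_idxOf_eq {w : List PSym} {i : ℕ} (h : i < w.length) :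
    prevOcc w i = none ↔ w.idxOf w[i] = i := by
  rw [prevOcc_eq_none_iff, List.idxOf, List.findIdx_eq h]
  simp only [beq_self_eq_true, true_and, beq_eq_false_iff_ne]
  refine forall₂_congr fun j hj => ?_
  rw [List.getElem?_eq_getElem h, List.getElem?_eq_getElem (hj.trans h), ne_eq, Option.some_inj]

theorem prevOcc_cons_succ_of_eq_some (c : PSym) {w : List PSym} {i j : ℕ}
    (h : prevOcc w i = some j) : prevOcc (c :: w) (i + 1) = some (j + 1) := by
  rw [prevOcc_eq_some_iff] at h ⊢
  obtain ⟨hji, hj, hmax⟩ := h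
  refine ⟨by omega, by simpa using hj, ?_⟩
  rintro (_ | k) hk hkw
  · omega
  · simpa using hmax k (by omega) (by simpa using hkw)

theorem prevOcc_cons_succ_of_eq_none (c : PSym) {w : List PSym} {i : ℕ}
    (h : prevOcc w i = none) :
    prevOcc (c :: w) (i + 1) = if w[i]? = some c then some 0 else none := by
  rw [prevOcc_eq_none_iff] at h
  split_ifs with hc
  · rw [prevOcc_eq_some_iff]
    refine ⟨by omega, by simpa using hc.symm, ?_⟩
    rintro (_ | k) hk hkw
    · rfl
    · exact absurd (by simpa using hkw) (h k (by omega))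
  · rw [prevOcc_eq_none_iff]
    rintro (_ | k) hk hkw
    · exact hc (by simpa using hkw.symm)
    · exact h k (by omega) (by simpa using hkw)

theorem pencSym_eq_inf_iff {w : List PSym} {i : ℕ} (h : i < w.length) :
    pencSym w i = Enc.inf ↔ (∃ a, w[i] = PSym.p a) ∧ w.idxOf w[i] = i := by
  rw [← prevOcc_eq_none_iff_idxOf_eq h]
  unfold pencSym
  rw [List.getElem?_eq_getElem h]
  cases w[i] with
  | s a => simp
  | p a => cases prevOcc w i <;> simp

theorem pencSym_idxOf {w : List PSym} {a : ℕ} (h : PSym.p a ∈ w) :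
    pencSym w (w.idxOf (PSym.p a)) = Enc.inf := by
  have hlt := List.idxOf_lt_length_of_mem h
  rw [pencSym_eq_inf_iff hlt, List.getElem_idxOf hlt]
  exact ⟨⟨a, rfl⟩, rfl⟩

theorem pencSym_lt_fin_succ {w : List PSym} {i : ℕ} (h : i < w.length)
    (hne : pencSym w i ≠ Enc.inf) : pencSym w i < Enc.fin (i + 1) := by
  unfold pencSym at hne ⊢
  rw [List.getElem?_eq_getElem h] at hne ⊢
  cases hwi : w[i] with
  | s a => simpa [hwi] using Enc.s_lt_fin a _
  | p a =>
    cases hprev : prevOcc w i with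
    | some j => simpa [hwi, hprev] using Enc.fin_lt_fin (show i - j < i + 1 by omega)
    | none => simp [hwi, hprev] at hne

theorem pencSym_cons_p_succ (a : ℕ) {w : List PSym} {i : ℕ} (h : i < w.length) :
    pencSym (PSym.p a :: w) (i + 1) =
      if w.idxOf (PSym.p a) = i then Enc.fin (i + 1) else pencSym w i := by
  split_ifs with hi
  · subst hi
    have hwi := List.getElem_idxOf h
    have hnone := (prevOcc_eq_none_iff_idxOf_eq h).mpr (by rw [hwi])
    simp [pencSym, prevOcc_cons_succ_of_eq_none _ hnone, List.getElem?_eq_getElem h, hwi]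
  · unfold pencSym
    rw [List.getElem?_cons_succ, List.getElem?_eq_getElem h]
    cases hwi : w[i] with
    | s b => rfl
    | p b =>
      cases hprev : prevOcc w i with
      | some j =>
        simp only [prevOcc_cons_succ_of_eq_some _ hprev]
        congr 1
        omega
      | none =>
        have hfirst : w.idxOf w[i] = i := (prevOcc_eq_none_iff_idxOf_eq h).mp hprev
        have hba : b ≠ a := by rintro rfl; exact hi (hwi ▸ hfirst)
        simp [prevOcc_cons_succ_of_eq_none _ hprev, List.getElem?_eq_getElem h, hwi, hba]

theorem length_penc (w : List PSym) : (penc w).length = w.length := by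
  simp [penc]

theorem getElem_penc {w : List PSym} {i : ℕ} (h : i < (penc w).length) :
    (penc w)[i] = pencSym w i := by
  simp [penc]

theorem getElem?_penc_of_lt {w : List PSym} {i : ℕ} (h : i < w.length) :
    (penc w)[i]? = some (pencSym w i) := by
  simp [penc, h]

theorem getElem?_penc_lt_fin_succ {w : List PSym} {i : ℕ} (h : (penc w)[i]? ≠ some Enc.inf) :
    (penc w)[i]? < some (Enc.fin (i + 1)) := by
  by_cases hi : i < w.length
  · rw [getElem?_penc_of_lt hi] at h ⊢
    exact Option.some_lt_some.mpr (pencSym_lt_fin_succ hi (by simpa using h))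
  · rw [List.getElem?_eq_none (by rw [length_penc]; omega)]
    exact Option.none_lt_some

theorem pencSym_take (w : List PSym) {k i : ℕ} (h : i < k) :
    pencSym (w.take k) i = pencSym w i := by
  have hprefix : ∀ j ≤ i, (w.take k)[j]? = w[j]? := fun j hj => by
    rw [List.getElem?_take, if_pos (by omega)]
  have hprev : prevOcc (w.take k) i = prevOcc w i := by
    unfold prevOcc
    congr 1
    refine List.filter_congr fun j hj => ?_
    rw [hprefix j (by simp at hj; omega), hprefix i le_rfl]
  unfold pencSym
  rw [hprefix i le_rfl, hprev]

theorem penc_take (w : List PSym) (k : ℕ) : penc (w.take k) = (penc w).take k := by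
  unfold penc
  rw [← List.map_take, List.take_range, List.length_take]
  refine List.map_congr_left fun i hi => pencSym_take w ?_
  simp at hi
  omega

theorem penc_append_singleton (w : List PSym) (c : PSym) :
    penc (w ++ [c]) = penc w ++ [pencSym (w ++ [c]) w.length] := by
  unfold penc
  rw [List.length_append, List.length_singleton, List.range_succ, List.map_append,
    List.map_singleton]
  congr 1
  refine List.map_congr_left fun i hi => ?_
  rw [← pencSym_take (w ++ [c]) (List.mem_range.mp hi), List.take_left' rfl]

def PSym.param : PSym → Option ℕ
  | .p a => some a
  | .s _ => none

theorem distinctP_eq (w : List PSym) : distinctP w = (w.filterMap PSym.param).dedup.length :=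
  rfl

theorem mem_filterMap_param {w : List PSym} {a : ℕ} :
    a ∈ w.filterMap PSym.param ↔ PSym.p a ∈ w := by
  simp only [List.mem_filterMap]
  constructor
  · rintro ⟨(_ | b), hb, h⟩ <;> simp_all [PSym.param]
  · exact fun h => ⟨_, h, rfl⟩

theorem distinctP_cons_s (b : ℕ) (w : List PSym) : distinctP (PSym.s b :: w) = distinctP w :=
  rfl

theorem distinctP_cons_p_of_mem {a : ℕ} {w : List PSym} (h : PSym.p a ∈ w) :
    distinctP (PSym.p a :: w) = distinctP w := by
  simp only [distinctP_eq, List.filterMap_cons, PSym.param,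
    List.dedup_cons_of_mem (mem_filterMap_param.mpr h)]

theorem distinctP_cons_p_of_notMem {a : ℕ} {w : List PSym} (h : PSym.p a ∉ w) :
    distinctP (PSym.p a :: w) = distinctP w + 1 := by
  simp only [distinctP_eq, List.filterMap_cons, PSym.param,
    List.dedup_cons_of_notMem (mt mem_filterMap_param.mp h), List.length_cons]

theorem distinctP_append_singleton (w : List PSym) (c : PSym) :
    distinctP (w ++ [c]) = distinctP (c :: w) := by
  simp only [distinctP_eq]
  exact ((List.perm_append_singleton c w).filterMap _).dedup.length_eq

theorem distinctP_le_of_subset {v w : List PSym} (h : v ⊆ w) : distinctP v ≤ distinctP w := by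
  simp only [distinctP_eq]
  refine (List.subperm_of_subset (List.nodup_dedup _) fun a ha => ?_).length_le
  exact List.mem_dedup.mpr (List.filterMap_subset _ h (List.mem_dedup.mp ha))

theorem count_inf_penc (w : List PSym) : (penc w).count Enc.inf = distinctP w := by
  induction w using List.reverseRecOn with
  | nil => rfl
  | append_singleton w c ih =>
    have hlt : w.length < (w ++ [c]).length := by simp
    have hinf : pencSym (w ++ [c]) w.length = Enc.inf ↔ (∃ a, c = PSym.p a) ∧ c ∉ w := by
      rw [pencSym_eq_inf_iff hlt, List.getElem_concat_length rfl]
      by_cases hc : c ∈ w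
      · simp [hc, List.idxOf_append_of_mem hc, (List.idxOf_lt_length_of_mem hc).ne]
      · simp [hc, List.idxOf_append_of_notMem hc]
    rw [penc_append_singleton, List.count_append, ih, distinctP_append_singleton,
      List.count_singleton]
    cases c with
    | s b => simp_all [distinctP_cons_s]
    | p b =>
      by_cases hb : PSym.p b ∈ w
      · simp_all [distinctP_cons_p_of_mem hb]
      · simp_all [distinctP_cons_p_of_notMem hb]

theorem count_inf_take_penc (w : List PSym) (k : ℕ) :
    ((penc w).take k).count Enc.inf = distinctP (w.take k) := by
  rw [← penc_take, count_inf_penc]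

theorem List.notMem_take_idxOf {α : Type*} [DecidableEq α] (l : List α) (c : α) :
    c ∉ l.take (l.idxOf c) := by
  intro h
  have hc := List.mem_of_mem_take h
  exact (List.mem_take_iff_idxOf_lt hc).mp h |>.false

theorem List.take_idxOf_succ {α : Type*} [DecidableEq α] {l : List α} {c : α} (h : c ∈ l) :
    l.take (l.idxOf c + 1) = l.take (l.idxOf c) ++ [c] := by
  rw [List.take_add_one, List.getElem?_idxOf h, Option.toList_some]

theorem distinctP_take_idxOf_succ {w : List PSym} {a : ℕ} (h : PSym.p a ∈ w) :
    distinctP (w.take (w.idxOf (PSym.p a) + 1)) = distinctP (w.take (w.idxOf (PSym.p a))) + 1 := by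
  rw [List.take_idxOf_succ h, distinctP_append_singleton,
    distinctP_cons_p_of_notMem (List.notMem_take_idxOf _ _)]

theorem fceRank_cons_p (a : ℕ) (w : List PSym) :
    fceRank (PSym.p a :: w) = distinctP (w.take (w.idxOf (PSym.p a))) + 1 := by
  rw [fceRank]
  by_cases h : PSym.p a ∈ w
  · have hlt := List.idxOf_lt_length_of_mem h
    rw [min_eq_right (by simp; omega), show 2 + w.idxOf (PSym.p a) = w.idxOf (PSym.p a) + 1 + 1
      by omega, List.take_succ_cons, distinctP_cons_p_of_mem (List.mem_take_iff_idxOf_lt h |>.mpr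
      (Nat.lt_succ_self _)), distinctP_take_idxOf_succ h]
  · rw [List.idxOf_of_notMem h, min_eq_left (by simp), List.take_length, List.take_length,
      distinctP_cons_p_of_notMem h]

theorem notMem_take_of_distinctP_take_lt_fceRank {w : List PSym} {a n : ℕ}
    (h : distinctP (w.take n) < fceRank (PSym.p a :: w)) : PSym.p a ∉ w.take n := by
  intro hmem
  have hw := List.mem_of_mem_take hmem
  have hidx := (List.mem_take_iff_idxOf_lt hw).mp hmem
  have hle := distinctP_le_of_subset (List.take_subset_take_left w (Nat.succ_le_of_lt hidx))
  rw [distinctP_take_idxOf_succ hw] at hle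
  rw [fceRank_cons_p] at h
  omega

/-- The tail of `⟨p a :: w⟩`: the first occurrence of `p a` in `w` is no longer fresh and
points back to position 0. -/
def pencAfter (a : ℕ) (w : List PSym) : List Enc :=
  (penc w).set (w.idxOf (PSym.p a)) (Enc.fin (w.idxOf (PSym.p a) + 1))

theorem penc_cons_p (a : ℕ) (w : List PSym) :
    penc (PSym.p a :: w) = Enc.inf :: pencAfter a w := by
  refine List.ext_getElem (by simp [pencAfter, length_penc]) fun i h₁ _ => ?_
  cases i with
  | zero => simp [getElem_penc, pencSym, prevOcc]
  | succ i =>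
    have hi : i < w.length := by simpa [length_penc] using h₁
    simp only [List.getElem_cons_succ, getElem_penc, pencAfter, List.getElem_set,
      pencSym_cons_p_succ a hi]
    split_ifs with h <;> simp [h]

theorem pencAfter_of_notMem {a : ℕ} {w : List PSym} (h : PSym.p a ∉ w) :
    pencAfter a w = penc w :=
  List.set_eq_of_length_le (by rw [length_penc, List.idxOf_of_notMem h])

theorem take_pencAfter {a n : ℕ} {w : List PSym} (h : PSym.p a ∉ w.take n) :
    (pencAfter a w).take n = (penc w).take n := by
  by_cases hw : PSym.p a ∈ w
  · exact List.take_set_of_le (not_lt.mp (mt (List.mem_take_iff_idxOf_lt hw).mpr h))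
  · rw [pencAfter_of_notMem hw]

theorem getElem?_pencAfter_of_ne_inf {a i : ℕ} {w : List PSym}
    (h : (penc w)[i]? ≠ some Enc.inf) : (pencAfter a w)[i]? = (penc w)[i]? := by
  by_cases hw : PSym.p a ∈ w
  · refine List.getElem?_set_ne fun hi => h ?_
    rw [← hi, getElem?_penc_of_lt (List.idxOf_lt_length_of_mem hw), pencSym_idxOf hw]
  · rw [pencAfter_of_notMem hw]

theorem getElem?_pencAfter_idxOf {a : ℕ} {w : List PSym} (h : PSym.p a ∈ w) :
    (pencAfter a w)[w.idxOf (PSym.p a)]? = some (Enc.fin (w.idxOf (PSym.p a) + 1)) :=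
  List.getElem?_set_self (by rw [length_penc]; exact List.idxOf_lt_length_of_mem h)

theorem lex_pencAfter_and_lcp_eq {xs ys : List PSym} {a b : ℕ}
    (hlt : List.Lex (· < ·) (penc xs) (penc ys))
    (hx : PSym.p a ∉ xs.take (lcp (penc xs) (penc ys)))
    (hy : PSym.p b ∉ ys.take (lcp (penc xs) (penc ys))) :
    List.Lex (· < ·) (pencAfter a xs) (pencAfter b ys) ∧
      lcp (pencAfter a xs) (pencAfter b ys) = lcp (penc xs) (penc ys) := by
  set n := lcp (penc xs) (penc ys)
  have htake : (pencAfter a xs).take n = (pencAfter b ys).take n := by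
    rw [take_pencAfter hx, take_pencAfter hy, take_lcp]
  have hn : (penc xs)[n]? < (penc ys)[n]? := getElem?_lcp_lt hlt
  have hxn : (penc xs)[n]? ≠ some Enc.inf := fun h => Enc.not_some_inf_lt _ (h ▸ hn)
  have hlt' : (pencAfter a xs)[n]? < (pencAfter b ys)[n]? := by
    rw [getElem?_pencAfter_of_ne_inf hxn]
    by_cases hyn : ys.idxOf (PSym.p b) = n
    · have hmem : PSym.p b ∈ ys := by
        by_contra hb
        rw [List.idxOf_of_notMem hb] at hyn
        rw [List.getElem?_eq_none (l := penc ys) (by rw [length_penc, hyn])] at hn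
        exact Option.not_lt_none hn
      rw [← hyn, getElem?_pencAfter_idxOf hmem, hyn]
      exact getElem?_penc_lt_fin_succ hxn
    · rwa [pencAfter, List.getElem?_set_ne hyn]
  exact ⟨lex_of_take_eq_of_getElem?_lt htake hlt', lcp_eq_of_take_eq_of_getElem?_lt htake hlt'⟩

/-- Case (B4): both strings start with p-symbols, ⟨x[2..]⟩ < ⟨y[2..]⟩ and
e = lcp∞(⟨x[2..]⟩,⟨y[2..]⟩) < min{fce(x), fce(y)}. -/
theorem stmt8 (a b : ℕ) (xs ys : List PSym)
    (hlt : lexLt (penc xs) (penc ys))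
    (e : ℕ) (he : e = lcpInf (penc xs) (penc ys))
    (hx : e < fceRank (PSym.p a :: xs)) (hy : e < fceRank (PSym.p b :: ys)) :
    lexLt (penc (PSym.p a :: xs)) (penc (PSym.p b :: ys)) ∧
    lcp (penc (PSym.p a :: xs)) (penc (PSym.p b :: ys)) =
      lcp (penc xs) (penc ys) + 1 ∧
    lcpInf (penc (PSym.p a :: xs)) (penc (PSym.p b :: ys)) = e + 1 := by
  have hxs : e = distinctP (xs.take (lcp (penc xs) (penc ys))) := by
    rw [he, lcpInf, count_inf_take_penc]
  have hys : e = distinctP (ys.take (lcp (penc xs) (penc ys))) := by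
    rw [he, lcpInf, take_lcp, count_inf_take_penc]
  have hxfresh := notMem_take_of_distinctP_take_lt_fceRank (hxs ▸ hx)
  have hyfresh := notMem_take_of_distinctP_take_lt_fceRank (hys ▸ hy)
  obtain ⟨hlex, hlcp⟩ := lex_pencAfter_and_lcp_eq hlt hxfresh hyfresh
  rw [penc_cons_p, penc_cons_p, lcpInf, lcp_cons_self, hlcp]
  refine ⟨.cons hlex, rfl, ?_⟩
  rw [List.take_succ_cons, List.count_cons_self, take_pencAfter hxfresh, he, lcpInf]
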